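/- Let Γ be a graph, ε a half-grid-like end of Γ, and let R and S be disjoint core rays of ε. Suppose ε splits in Γ − V(S) into the two ends ε′_S and ε″_S, and in Γ − V(R) into the two ends ε′_R and ε″_R. If R belongs to ε′_S and S belongs to ε′_R, then ε″_S is a sub-end of ε′_R and ε″_R is a sub-end of ε′_S. -/

import Mathlib

set_option autoImplicit false

namespace Ubiquity

variable {V W T : Type}

/-- A ray (one-way infinite path) in a graph `G`. -/
structure Ray (G : SimpleGraph V) where
  f : ℕ → V
  inj : Function.Injective f
  adj : ∀ n : ℕ, G.Adj (f n) (f (n + 1))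

/-- The vertex set of a ray. -/
def Ray.verts {G : SimpleGraph V} (R : Ray G) : Set V := Set.range R.f

/-- The tail of a ray from its `k`-th vertex on. -/
def Ray.tail {G : SimpleGraph V} (R : Ray G) (k : ℕ) : Ray G where
  f := fun n => R.f (n + k)
  inj := fun a b h => by have := R.inj h; omega
  adj := fun n => by
    show G.Adj (R.f (n + k)) (R.f (n + 1 + k))
    have h : n + 1 + k = n + k + 1 := by omega
    rw [h]
    exact R.adj (n + k)

/-- `R'` is a tail of the ray `R`. -/
def Ray.IsTailOf {G : SimpleGraph V} (R' R : Ray G) : Prop :=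
  ∃ k : ℕ, ∀ n : ℕ, R'.f n = R.f (n + k)

/-- A path in `G` from a vertex of `A` to a vertex of `B`. -/
structure PathBetween (G : SimpleGraph V) (A B : Set V) where
  first : V
  last : V
  walk : G.Walk first last
  isPath : walk.IsPath
  first_mem : first ∈ A
  last_mem : last ∈ B

/-- The vertex set of such a path. -/
def PathBetween.verts {G : SimpleGraph V} {A B : Set V} (P : PathBetween G A B) : Set V :=
  {v | v ∈ P.walk.support}

/-- Two rays are equivalent in `G − X`: there are infinitely many pairwise
vertex-disjoint paths between them, all avoiding `X`. -/
def RayEquivAvoiding (G : SimpleGraph V) (X : Set V) (R S : Ray G) : Prop :=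
  ∃ P : ℕ → PathBetween G R.verts S.verts,
    (∀ n : ℕ, ∀ v ∈ (P n).verts, v ∉ X) ∧
    ∀ m n : ℕ, m ≠ n → Disjoint (P m).verts (P n).verts

/-- Two rays are equivalent: there are infinitely many pairwise vertex-disjoint
paths between them. -/
def RayEquiv (G : SimpleGraph V) (R S : Ray G) : Prop := RayEquivAvoiding G ∅ R S

/-- `ε` is an end of `G`: an equivalence class of rays. -/
def IsEnd (G : SimpleGraph V) (ε : Set (Ray G)) : Prop :=
  ε.Nonempty ∧ ∀ R ∈ ε, ∀ S : Ray G, S ∈ ε ↔ RayEquiv G R S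

/-- An end of `G − X`, viewed as an equivalence class of rays of `G` avoiding `X`. -/
def IsEndAvoiding (G : SimpleGraph V) (X : Set V) (δ : Set (Ray G)) : Prop :=
  δ.Nonempty ∧ (∀ R ∈ δ, Disjoint R.verts X) ∧
    ∀ R ∈ δ, ∀ S : Ray G, Disjoint S.verts X → (S ∈ δ ↔ RayEquivAvoiding G X R S)

/-- A family of pairwise disjoint rays, all belonging to `ε`. -/
def DisjointRayFamily {I : Type} (G : SimpleGraph V) (ε : Set (Ray G)) (R : I → Ray G) : Prop :=
  (∀ i, R i ∈ ε) ∧ ∀ i j : I, i ≠ j → Disjoint (R i).verts (R j).verts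

/-- The end `ε` has finite degree (is thin): for some `k` there is no family of
`k+1` pairwise disjoint `ε`-rays. -/
def ThinEnd (G : SimpleGraph V) (ε : Set (Ray G)) : Prop :=
  ∃ k : ℕ, ∀ R : Fin (k + 1) → Ray G, (∀ i, R i ∈ ε) →
    ¬ ∀ i j, i ≠ j → Disjoint (R i).verts (R j).verts

/-- The end `ε` is thick: it contains arbitrarily many disjoint rays. -/
def ThickEnd (G : SimpleGraph V) (ε : Set (Ray G)) : Prop :=
  ∀ n : ℕ, ∃ R : Fin n → Ray G, DisjointRayFamily G ε R

/-- `G` is locally finite. -/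
def LocFin (G : SimpleGraph V) : Prop := ∀ v : V, (G.neighborSet v).Finite

/-- An inflated copy of `G` inside `Γ`: a subgraph `H` of `Γ` with a map `φ`
whose branch sets are nonempty and connected, such that there is an edge of `H`
between the branch sets of `v` and `w` iff `vw ∈ E(G)`, this edge being unique. -/
structure InflatedCopy (G : SimpleGraph V) (Γ : SimpleGraph W) where
  H : Γ.Subgraph
  φ : W → V
  branch_nonempty : ∀ v : V, ∃ w ∈ H.verts, φ w = v
  branch_connected : ∀ v : V, (H.induce {w ∈ H.verts | φ w = v}).Connected
  adj_of_edge : ∀ ⦃a b : W⦄, H.Adj a b → φ a ≠ φ b → G.Adj (φ a) (φ b)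
  edge_of_adj : ∀ ⦃v w : V⦄, G.Adj v w → ∃ a b : W, H.Adj a b ∧ φ a = v ∧ φ b = w
  edge_unique : ∀ ⦃v w : V⦄, G.Adj v w → ∀ a b a' b' : W, H.Adj a b → H.Adj a' b' →
    φ a = v → φ b = w → φ a' = v → φ b' = w → a = a' ∧ b = b'

/-- The branch set of `v` in an inflated copy. -/
def InflatedCopy.branch {G : SimpleGraph V} {Γ : SimpleGraph W} (Hc : InflatedCopy G Γ)
    (v : V) : Set W := {w ∈ Hc.H.verts | Hc.φ w = v}

/-- A tidy inflated copy: each branch set induces a tree, finite whenever the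
corresponding vertex has finite degree. -/
def InflatedCopy.Tidy {G : SimpleGraph V} {Γ : SimpleGraph W} (Hc : InflatedCopy G Γ) : Prop :=
  ∀ v : V, (Hc.H.induce (Hc.branch v)).coe.IsTree ∧
    ((G.neighborSet v).Finite → (Hc.branch v).Finite)

/-- `G` is a minor of `Γ`. -/
def IsMinor (G : SimpleGraph V) (Γ : SimpleGraph W) : Prop := Nonempty (InflatedCopy G Γ)

/-- The disjoint union of `ι` many copies of `G`. -/
def copies (ι : Type) (G : SimpleGraph V) : SimpleGraph (ι × V) where
  Adj a b := a.1 = b.1 ∧ G.Adj a.2 b.2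
  symm := ⟨fun _ _ h => ⟨h.1.symm, h.2.symm⟩⟩
  loopless := ⟨fun a h => G.loopless.irrefl a.2 h.2⟩

/-- `a` and `b` are joined by a walk of `K` avoiding the set `X`. -/
def ReachAvoid {α : Type} (K : SimpleGraph α) (X : Set α) (a b : α) : Prop :=
  ∃ w : K.Walk a b, ∀ x ∈ w.support, x ∉ X


/-! ### Linkages and transition functions -/

/-- A linkage from the family `R` to the family `S` of disjoint rays: a family
of disjoint paths `path i` from a vertex of `R i` to a vertex of `S (σ i)` such
that the concatenated rays form a family of disjoint rays. -/
structure Linkage (Γ : SimpleGraph W) {I J : Type} (R : I → Ray Γ) (S : J → Ray Γ) where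
  σ : I → J
  inj : Function.Injective σ
  exit : I → ℕ
  entry : I → ℕ
  path : ∀ i : I, Γ.Walk ((R i).f (exit i)) ((S (σ i)).f (entry i))
  isPath : ∀ i : I, (path i).IsPath
  meet_init : ∀ i : I, ∀ v ∈ (path i).support,
    (∃ k ≤ exit i, (R i).f k = v) → v = (R i).f (exit i)
  meet_tail : ∀ i : I, ∀ v ∈ (path i).support,
    (∃ k : ℕ, entry i ≤ k ∧ (S (σ i)).f k = v) → v = (S (σ i)).f (entry i)
  init_tail : ∀ i : I, ∀ k ≤ exit i, ∀ k' : ℕ, entry i ≤ k' →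
    (R i).f k = (S (σ i)).f k' → k = exit i ∧ k' = entry i
  disj : ∀ i j : I, i ≠ j → ∀ v : W,
    ((∃ k ≤ exit i, (R i).f k = v) ∨ v ∈ (path i).support ∨
      ∃ k : ℕ, entry i ≤ k ∧ (S (σ i)).f k = v) →
    ((∃ k ≤ exit j, (R j).f k = v) ∨ v ∈ (path j).support ∨
      ∃ k : ℕ, entry j ≤ k ∧ (S (σ j)).f k = v) → False

/-- The vertex set of the `i`-th concatenated ray of a linkage. -/
def Linkage.rverts {Γ : SimpleGraph W} {I J : Type} {R : I → Ray Γ} {S : J → Ray Γ}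
    (L : Linkage Γ R S) (i : I) : Set W :=
  {v | (∃ k ≤ L.exit i, (R i).f k = v) ∨ v ∈ (L.path i).support ∨
    ∃ k : ℕ, L.entry i ≤ k ∧ (S (L.σ i)).f k = v}

/-- A linkage is after `X` if `X` meets each concatenated ray only within the
initial segment of the corresponding ray of `R`. -/
def Linkage.After {Γ : SimpleGraph W} {I J : Type} {R : I → Ray Γ} {S : J → Ray Γ}
    (L : Linkage Γ R S) (X : Set W) : Prop :=
  ∀ i : I, ∀ v ∈ X, v ∈ L.rverts i → ∃ k ≤ L.exit i, (R i).f k = v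

/-- `σ` is a transition function from `R` to `S`: for every finite vertex set `X`
there is a linkage from `R` to `S` after `X` inducing `σ`. -/
def IsTransitionFunction (Γ : SimpleGraph W) {I J : Type} (R : I → Ray Γ) (S : J → Ray Γ)
    (σ : I → J) : Prop :=
  ∀ X : Set W, X.Finite → ∃ L : Linkage Γ R S, L.σ = σ ∧ L.After X

/-- A linkage is transitional if the function it induces is a transition function. -/
def Linkage.Transitional {Γ : SimpleGraph W} {I J : Type} {R : I → Ray Γ} {S : J → Ray Γ}
    (L : Linkage Γ R S) : Prop := IsTransitionFunction Γ R S L.σ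

/-! ### Ray graphs and separation -/

/-- There are infinitely many disjoint paths from `R i` to `R j` meeting no other `R k`. -/
def LinkedRays (Γ : SimpleGraph W) {I : Type} (R : I → Ray Γ) (i j : I) : Prop :=
  ∃ P : ℕ → PathBetween Γ (R i).verts (R j).verts,
    (∀ m n : ℕ, m ≠ n → Disjoint (P m).verts (P n).verts) ∧
    ∀ n : ℕ, ∀ k : I, k ≠ i → k ≠ j → Disjoint (P n).verts (R k).verts

/-- The ray graph of a family of disjoint rays. -/
def rayGraph (Γ : SimpleGraph W) {I : Type} (R : I → Ray Γ) : SimpleGraph I where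
  Adj i j := i ≠ j ∧ (LinkedRays Γ R i j ∨ LinkedRays Γ R j i)
  symm := ⟨fun _ _ h => ⟨h.1.symm, h.2.symm⟩⟩
  loopless := ⟨fun _ h => h.1 rfl⟩

/-- `S` separates `R` from `T'`: the tails of `R` and `T'` disjoint from `S`
belong to different ends of `Γ − V(S)`. -/
def SeparatesRay (Γ : SimpleGraph W) (S R T' : Ray Γ) : Prop :=
  ∀ R' T'' : Ray Γ, R'.IsTailOf R → T''.IsTailOf T' →
    Disjoint R'.verts S.verts → Disjoint T''.verts S.verts →
    ¬ RayEquivAvoiding Γ S.verts R' T''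

/-- `K − c` has precisely two connected components, each of size at least `m`. -/
def TwoCompsAtLeast {I : Type} (K : SimpleGraph I) (c : I) (m : ℕ) : Prop :=
  ∃ A B : Set I, A.Nonempty ∧ B.Nonempty ∧ Disjoint A B ∧ A ∪ B = {i | i ≠ c} ∧
    (∀ a ∈ A, ∀ b ∈ A, ReachAvoid K {c} a b) ∧
    (∀ a ∈ B, ∀ b ∈ B, ReachAvoid K {c} a b) ∧
    (∀ a ∈ A, ∀ b ∈ B, ¬ ReachAvoid K {c} a b) ∧
    (m : ℕ∞) ≤ A.encard ∧ (m : ℕ∞) ≤ B.encard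

/-- `i` is an inner vertex of the (nodup) list `L`. -/
def IsInnerListVertex {n : ℕ} (L : List (Fin n)) (i : Fin n) : Prop :=
  i ∈ L ∧ 0 < L.idxOf i ∧ L.idxOf i + 1 < L.length

/-- The end `ε` splits in `Γ − X` into the two ends `δ` and `δ'`. -/
def SplitsInto (Γ : SimpleGraph W) (ε : Set (Ray Γ)) (X : Set W) (δ δ' : Set (Ray Γ)) : Prop :=
  IsEndAvoiding Γ X δ ∧ IsEndAvoiding Γ X δ' ∧ δ ≠ δ' ∧
    ∀ S ∈ ε, Disjoint (Ray.verts S) X → S ∈ δ ∪ δ'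

/-- `δ` is a sub-end of `δ'`: every ray of `δ` has a tail in `δ'`. -/
def SubEnd (Γ : SimpleGraph W) (δ δ' : Set (Ray Γ)) : Prop :=
  ∀ R ∈ δ, ∃ R' : Ray Γ, R'.IsTailOf R ∧ R' ∈ δ'

/-! ### Half-grid-like ends -/

/-- A witness that the thick end `ε` of `Γ` is half-grid-like: there is `N ∈ ℕ`
and a choice of (correctly oriented) central path for each family of disjoint
`ε`-rays such that: for families of size at least `N + 2` the central path is a
bare path of the ray graph containing all but at most `N` of its vertices, every
vertex whose deletion leaves precisely two components of size at least `N + 1`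
is an inner vertex of the central path, and every transition function between
families of at least `N + 3` disjoint `ε`-rays maps central path vertices to
central path vertices preserving the correct orientation. -/
structure HalfGridLike (Γ : SimpleGraph W) (ε : Set (Ray Γ)) where
  isEnd : IsEnd Γ ε
  thick : ThickEnd Γ ε
  N : ℕ
  central : ∀ {n : ℕ}, (Fin n → Ray Γ) → List (Fin n)
  central_nodup : ∀ {n : ℕ} (R : Fin n → Ray Γ), DisjointRayFamily Γ ε R → N + 2 ≤ n →
    (central R).Nodup
  central_chain : ∀ {n : ℕ} (R : Fin n → Ray Γ), DisjointRayFamily Γ ε R → N + 2 ≤ n →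
    (central R).Chain' (rayGraph Γ R).Adj
  central_large : ∀ {n : ℕ} (R : Fin n → Ray Γ), DisjointRayFamily Γ ε R → N + 2 ≤ n →
    n ≤ (central R).length + N
  central_bare : ∀ {n : ℕ} (R : Fin n → Ray Γ), DisjointRayFamily Γ ε R → N + 2 ≤ n →
    ∀ i : Fin n, IsInnerListVertex (central R) i → ((rayGraph Γ R).neighborSet i).encard = 2
  central_inner : ∀ {n : ℕ} (R : Fin n → Ray Γ), DisjointRayFamily Γ ε R → N + 2 ≤ n →
    ∀ c : Fin n, TwoCompsAtLeast (rayGraph Γ R) c (N + 1) → IsInnerListVertex (central R) c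
  central_map : ∀ {n m : ℕ} (R : Fin n → Ray Γ) (S : Fin m → Ray Γ),
    DisjointRayFamily Γ ε R → DisjointRayFamily Γ ε S → N + 3 ≤ n → N + 3 ≤ m →
    ∀ σ : Fin n → Fin m, IsTransitionFunction Γ R S σ →
    ∀ i ∈ central R, σ i ∈ central S
  central_order : ∀ {n m : ℕ} (R : Fin n → Ray Γ) (S : Fin m → Ray Γ),
    DisjointRayFamily Γ ε R → DisjointRayFamily Γ ε S → N + 3 ≤ n → N + 3 ≤ m →
    ∀ σ : Fin n → Fin m, IsTransitionFunction Γ R S σ →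
    ∀ i ∈ central R, ∀ j ∈ central R, (central R).idxOf i < (central R).idxOf j →
      (central S).idxOf (σ i) < (central S).idxOf (σ j)

/-- A core ray of the half-grid-like end `ε`. -/
def IsCoreRay {Γ : SimpleGraph W} {ε : Set (Ray Γ)} (hg : HalfGridLike Γ ε) (R : Ray Γ) : Prop :=
  R ∈ ε ∧ ∃ (n : ℕ) (F : Fin n → Ray Γ) (c : Fin n),
    DisjointRayFamily Γ ε F ∧ F c = R ∧ TwoCompsAtLeast (rayGraph Γ F) c (hg.N + 1)

/-- `(δ, δ')` is the pair of ends `(⊤(F c, F), ⊥(F c, F))` of `Γ − V(F c)`. -/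
def IsTopBotPair {Γ : SimpleGraph W} {ε : Set (Ray Γ)} (hg : HalfGridLike Γ ε)
    {n : ℕ} (F : Fin n → Ray Γ) (c : Fin n) (δ δ' : Set (Ray Γ)) : Prop :=
  IsEndAvoiding Γ (F c).verts δ ∧ IsEndAvoiding Γ (F c).verts δ' ∧ δ ≠ δ' ∧
  (∀ S ∈ ε, Disjoint (Ray.verts S) (F c).verts → S ∈ δ ∪ δ') ∧
  (∀ i : Fin n, i ∈ hg.central F →
    (hg.central F).idxOf i < (hg.central F).idxOf c → F i ∈ δ) ∧
  ∀ i : Fin n, i ∈ hg.central F →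
    (hg.central F).idxOf c < (hg.central F).idxOf i → F i ∈ δ'

/-- `R ∈ ⊤(ε, S)`: for some family witnessing `S` on a central path, `R` lies in
the top end of `Γ − V(S)`. -/
def InTop {Γ : SimpleGraph W} {ε : Set (Ray Γ)} (hg : HalfGridLike Γ ε) (S R : Ray Γ) : Prop :=
  ∃ (n : ℕ) (F : Fin n → Ray Γ) (c : Fin n) (δ δ' : Set (Ray Γ)),
    DisjointRayFamily Γ ε F ∧ hg.N + 2 ≤ n ∧ F c = S ∧ c ∈ hg.central F ∧
    IsTopBotPair hg F c δ δ' ∧ R ∈ δ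

/-- The relation `≤_ε` on core rays. -/
def coreLE {Γ : SimpleGraph W} {ε : Set (Ray Γ)} (hg : HalfGridLike Γ ε) (R S : Ray Γ) : Prop :=
  R = S ∨ ∃ a b : ℕ, Disjoint (R.tail a).verts (S.tail b).verts ∧
    InTop hg (S.tail b) (R.tail a)

/-- `R̄` (with inclusion `ι`) is an extension of the family `R` of core rays as in
Lemma 5.19: every ray of `R` disconnects the ray graph of `R̄` into exactly two
components of size at least `N + 1` and is an inner vertex of the central path,
and `|R̄| = |R| + 2N + 2`. -/
def IsBarExtension {Γ : SimpleGraph W} {ε : Set (Ray Γ)} (hg : HalfGridLike Γ ε)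
    {k : ℕ} (R : Fin k → Ray Γ) (Rbar : Fin (k + (2 * hg.N + 2)) → Ray Γ)
    (ι : Fin k ↪ Fin (k + (2 * hg.N + 2))) : Prop :=
  DisjointRayFamily Γ ε Rbar ∧ (∀ i, Rbar (ι i) = R i) ∧
  (∀ i : Fin k, TwoCompsAtLeast (rayGraph Γ Rbar) (ι i) (hg.N + 1)) ∧
  ∀ i : Fin k, IsInnerListVertex (hg.central Rbar) (ι i)

/-- A linkage is preserving on the subfamily `R` (included via `ι`): it links the
rays of `R` to core rays and preserves the order `≤_ε`. -/
def PreservingOn {Γ : SimpleGraph W} {ε : Set (Ray Γ)} (hg : HalfGridLike Γ ε)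
    {k p m : ℕ} (R : Fin k → Ray Γ) (ι : Fin k ↪ Fin p)
    {Rbar : Fin p → Ray Γ} {S : Fin m → Ray Γ} (L : Linkage Γ Rbar S) : Prop :=
  (∀ i : Fin k, IsCoreRay hg (S (L.σ (ι i)))) ∧
  ∀ i j : Fin k, coreLE hg (R i) (R j) → coreLE hg (S (L.σ (ι i))) (S (L.σ (ι j)))


/-! ### Tree-decompositions -/

/-- A tree-decomposition of `G` with decomposition tree on the vertex type `T`. -/
structure TreeDecomp (G : SimpleGraph V) (T : Type) where
  tree : SimpleGraph T
  isTree : tree.IsTree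
  part : T → Set V
  cover : ∀ v : V, ∃ t : T, v ∈ part t
  edge_cover : ∀ ⦃u v : V⦄, G.Adj u v → ∃ t : T, u ∈ part t ∧ v ∈ part t
  interpolate : ∀ ⦃t₁ t₂ t₃ : T⦄ (p : tree.Walk t₁ t₃), p.IsPath → t₂ ∈ p.support →
    part t₁ ∩ part t₃ ⊆ part t₂

/-- A rooted tree-decomposition. -/
structure RootedTreeDecomp (G : SimpleGraph V) (T : Type) extends TreeDecomp G T where
  root : T

/-- An edge of the decomposition tree, oriented away from the root: `tgt` is the
endvertex farther from the root. -/
structure RootedTreeDecomp.Edge {G : SimpleGraph V} {T : Type} (D : RootedTreeDecomp G T) where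
  src : T
  tgt : T
  adj : D.tree.Adj src tgt
  away : D.tree.dist D.root tgt = D.tree.dist D.root src + 1

/-- The vertex set of the component `T_{e⁺}` of `T − e` containing `e.tgt`. -/
def RootedTreeDecomp.above {G : SimpleGraph V} {T : Type} (D : RootedTreeDecomp G T)
    (e : D.Edge) : Set T :=
  {t | ∃ w : D.tree.Walk t e.tgt, e.src ∉ w.support}

/-- The bough `B(e)`: the union of the parts indexed by `T_{e⁺}`. -/
def RootedTreeDecomp.bough {G : SimpleGraph V} {T : Type} (D : RootedTreeDecomp G T)
    (e : D.Edge) : Set V :=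
  {v | ∃ t ∈ D.above e, v ∈ D.part t}

/-- The set `A(e)`: the union of the parts indexed outside `T_{e⁺}`. -/
def RootedTreeDecomp.sideA {G : SimpleGraph V} {T : Type} (D : RootedTreeDecomp G T)
    (e : D.Edge) : Set V :=
  {v | ∃ t : T, t ∉ D.above e ∧ v ∈ D.part t}

/-- The separator `S(e) = V_{e⁻} ∩ V_{e⁺}`. -/
def RootedTreeDecomp.sep {G : SimpleGraph V} {T : Type} (D : RootedTreeDecomp G T)
    (e : D.Edge) : Set V :=
  D.part e.src ∩ D.part e.tgt

/-- The graph `Ḡ[B(e)]`: the induced graph on `B(e)` with all edges between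
vertices of `S(e)` deleted. -/
def RootedTreeDecomp.barB {G : SimpleGraph V} {T : Type} (D : RootedTreeDecomp G T)
    (e : D.Edge) : SimpleGraph (D.bough e) where
  Adj a b := G.Adj ↑a ↑b ∧ ¬((↑a : V) ∈ D.sep e ∧ (↑b : V) ∈ D.sep e)
  symm := ⟨fun _ _ h => ⟨h.1.symm, fun hc => h.2 ⟨hc.2, hc.1⟩⟩⟩
  loopless := ⟨fun a h => G.loopless.irrefl ↑a h.1⟩

/-- A witness for the self-similarity of the bough `B(e)` along the family of
rays `Rfam`, of distance at least `n`: an edge `e'` of `T_{e⁺}` at distance at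
least `n`, together with an inflated copy `Wcopy` of `Ḡ[B(e)]` inside `G[B(e')]`
such that each ray `Rfam s` (for `s ∈ S(e)`) meets `S(e')` only inside the
branch set of `s`. -/
structure SelfSimilarityWitness {G : SimpleGraph V} {T : Type} (D : RootedTreeDecomp G T)
    (e : D.Edge) (Rfam : V → Ray G) (n : ℕ) where
  e' : D.Edge
  habove : e'.src ∈ D.above e
  hfar : n ≤ D.tree.dist e.src e'.src
  Wcopy : InflatedCopy (D.barB e) G
  hsub : Wcopy.H.verts ⊆ D.bough e'
  hmeets : ∀ s ∈ D.sep e, ∃ k : ℕ, (Rfam s).f k ∈ D.sep e'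
  hbranch : ∀ s ∈ D.sep e, ∀ k : ℕ, (Rfam s).f k ∈ D.sep e' →
    (Rfam s).f k ∈ Wcopy.H.verts ∧ (↑(Wcopy.φ ((Rfam s).f k)) : V) = s

/-- The bough `B(e)` is self-similar towards the end `ω` of `G`. -/
def BoughSelfSimilar {G : SimpleGraph V} {T : Type} (D : RootedTreeDecomp G T) (e : D.Edge)
    (ω : Set (Ray G)) : Prop :=
  ∃ Rfam : V → Ray G,
    (∀ s ∈ D.sep e, (Rfam s).f 0 = s ∧ Rfam s ∈ ω) ∧
    (∀ s ∈ D.sep e, ∀ s' ∈ D.sep e, s ≠ s' → Disjoint (Rfam s).verts (Rfam s').verts) ∧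
    ∀ n : ℕ, Nonempty (SelfSimilarityWitness D e Rfam n)

/-- An extensive tree-decomposition: the tree is locally finite, every part is
finite, every vertex lies in finitely many parts, and every bough is
self-similar towards some end of `G`. -/
def Extensive {G : SimpleGraph V} {T : Type} (D : RootedTreeDecomp G T) : Prop :=
  (∀ t : T, (D.tree.neighborSet t).Finite) ∧
  (∀ t : T, (D.part t).Finite) ∧
  (∀ v : V, {t : T | v ∈ D.part t}.Finite) ∧
  ∀ e : D.Edge, ∃ ω : Set (Ray G), IsEnd G ω ∧ BoughSelfSimilar D e ω

/-- A lean tree-decomposition. -/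
def LeanTD {G : SimpleGraph V} {T : Type} (D : RootedTreeDecomp G T) : Prop :=
  ∀ (k : ℕ) (t₁ t₂ : T) (X₁ X₂ : Set V), X₁ ⊆ D.part t₁ → X₂ ⊆ D.part t₂ →
    (k : ℕ∞) ≤ X₁.encard → (k : ℕ∞) ≤ X₂.encard →
    (∃ P : Fin k → PathBetween G X₁ X₂, ∀ i j, i ≠ j → Disjoint (P i).verts (P j).verts) ∨
    ∃ t : T, (∀ p : D.tree.Walk t₁ t₂, p.IsPath → t ∈ p.support) ∧ (D.part t).encard < (k : ℕ∞)

/-- The ray `0 – 1 – 2 – ⋯` as a graph on `ℕ`. -/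
def pathGraphN : SimpleGraph ℕ where
  Adj a b := a + 1 = b ∨ b + 1 = a
  symm := ⟨fun _ _ h => h.symm⟩
  loopless := ⟨fun a h => by rcases h with h | h <;> omega⟩

/-! ### Pullbacks and end components -/

/-- `S` is a pullback of the ray `R` of `G` to the inflated copy `Hc`: `S`
traverses the branch sets of the vertices of `R` consecutively and in order. -/
def IsPullbackRay {G : SimpleGraph V} {Γ : SimpleGraph W} (Hc : InflatedCopy G Γ)
    (R : Ray G) (S : Ray Γ) : Prop :=
  ∃ g : ℕ → ℕ, Monotone g ∧ g 0 = 0 ∧ (∀ m : ℕ, ∃ k, m ≤ g k) ∧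
    (∀ k, g (k + 1) ≤ g k + 1) ∧
    ∀ k, S.f k ∈ Hc.H.verts ∧ Hc.φ (S.f k) = R.f (g k)

/-- The component `C(X, δ)` of `Γ − X` in which every ray of `δ` has a tail. -/
def endComp (Γ : SimpleGraph W) (X : Set W) (δ : Set (Ray Γ)) : Set W :=
  {w | ∃ R ∈ δ, ∃ k : ℕ, (∀ j : ℕ, k ≤ j → R.f j ∉ X) ∧ ReachAvoid Γ X w (R.f k)}

/-!
Let `T` be a ray of `ε″_S`. Since `S` is a core ray, the two components of the ray graph at
`S` contain rays that are not equivalent in `Γ − V(S)`, so one of them lies in `ε″_S`, and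
hence `ε″_S` consists of `ε`-rays. The ray `T` meets `R` only finitely often (otherwise it
would be equivalent to `R` in `Γ − V(S)`, i.e. lie in `ε′_S`), so a tail `T'` of `T` avoids
`R ∪ S`. Cutting each of infinitely many disjoint `T'`–`S` paths at its first vertex in
`R ∪ S`, infinitely many of the pieces end in `R` or infinitely many end in `S`. The former
again puts `T'` into `ε′_S`; the latter witnesses `T' ∈ ε′_R`.
-/

open SimpleGraph Set Function

theorem _root_.SimpleGraph.Walk.exists_sublist_support_first_mem {G : SimpleGraph W}
    {B : Set W} {u v : W} (p : G.Walk u v) (hv : v ∈ B) :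
    ∃ y ∈ B, ∃ q : G.Walk u y,
      q.support.Sublist p.support ∧ ∀ z ∈ q.support, z ∈ B → z = y := by
  induction p with
  | nil => exact ⟨_, hv, Walk.nil, by simp, by simp⟩
  | @cons a _ _ h p ih =>
    by_cases ha : a ∈ B
    · exact ⟨a, ha, Walk.nil, by simp, by simp⟩
    · obtain ⟨y, hy, q, hsub, hfirst⟩ := ih hv
      refine ⟨y, hy, Walk.cons h q, by simpa using hsub.cons_cons a, ?_⟩
      intro z hz hzB
      rcases List.mem_cons.mp (by simpa using hz) with rfl | hz
      · exact absurd hzB ha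
      · exact hfirst z hz hzB

theorem reachAvoid_of_adj {α : Type} {K : SimpleGraph α} {X : Set α} {a b : α} (h : K.Adj a b)
    (ha : a ∉ X) (hb : b ∉ X) : ReachAvoid K X a b :=
  ⟨h.toWalk, by simp [ha, hb]⟩

namespace PathBetween

variable {G : SimpleGraph W} {A B A' B' : Set W}

/-- Diestel's `A`–`B` paths: `A` is met only in the first vertex, `B` only in the last. -/
def IsAB (P : PathBetween G A B) : Prop :=
  (∀ v ∈ P.verts, v ∈ A → v = P.first) ∧ ∀ v ∈ P.verts, v ∈ B → v = P.last

def reverse (P : PathBetween G A B) : PathBetween G B A :=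
  ⟨P.last, P.first, P.walk.reverse, P.isPath.reverse, P.last_mem, P.first_mem⟩

theorem verts_reverse (P : PathBetween G A B) : P.reverse.verts = P.verts := by
  ext v
  simp [reverse, verts]

def ofMem (P : PathBetween G A B) (hA : P.first ∈ A') (hB : P.last ∈ B') :
    PathBetween G A' B' :=
  ⟨P.first, P.last, P.walk, P.isPath, hA, hB⟩

theorem exists_isAB_subpath (P : PathBetween G A B) :
    ∃ Q : PathBetween G A B, Q.IsAB ∧ Q.verts ⊆ P.verts := by
  obtain ⟨y, hy, q, hq, hqB⟩ := P.walk.exists_sublist_support_first_mem P.last_mem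
  obtain ⟨x, hx, r, hr, hrA⟩ := q.reverse.exists_sublist_support_first_mem P.first_mem
  have hrq : r.reverse.support.Sublist q.support := by simpa using hr.reverse
  have hsub := hrq.trans hq
  have hpath : r.reverse.IsPath := (Walk.isPath_def _).2 (P.isPath.support_nodup.sublist hsub)
  refine ⟨⟨x, y, r.reverse, hpath, hx, hy⟩, ⟨fun v hv hvA => hrA v (by simpa [verts] using hv) hvA,
    fun v hv hvB => hqB v (hrq.subset hv) hvB⟩, fun v hv => hsub.subset hv⟩

end PathBetween

section RayEquiv

variable {G : SimpleGraph W} {X Y : Set W} {R S T : Ray G}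

theorem rayEquivAvoiding_of_infinite {ι : Type} [Infinite ι]
    (P : ι → PathBetween G R.verts S.verts) (havoid : ∀ i, ∀ v ∈ (P i).verts, v ∉ X)
    (hdisj : Pairwise (Disjoint on fun i => (P i).verts)) : RayEquivAvoiding G X R S :=
  let e := Infinite.natEmbedding ι
  ⟨fun n => P (e n), fun n => havoid (e n), fun _ _ h => hdisj (e.injective.ne h)⟩

theorem RayEquivAvoiding.symm (h : RayEquivAvoiding G X R S) : RayEquivAvoiding G X S R := by
  obtain ⟨P, havoid, hdisj⟩ := h
  exact ⟨fun n => (P n).reverse, by simpa only [PathBetween.verts_reverse] using havoid,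
    by simpa only [PathBetween.verts_reverse] using hdisj⟩

theorem RayEquivAvoiding.mono (hYX : Y ⊆ X) (h : RayEquivAvoiding G X R S) :
    RayEquivAvoiding G Y R S := by
  obtain ⟨P, havoid, hdisj⟩ := h
  exact ⟨P, fun n v hv hvY => havoid n v hv (hYX hvY), hdisj⟩

theorem RayEquivAvoiding.rayEquiv (h : RayEquivAvoiding G X R S) : RayEquiv G R S :=
  h.mono (empty_subset X)

theorem rayEquivAvoiding_of_infinite_meets (hT : Disjoint T.verts X)
    (hinf : {n | T.f n ∈ R.verts}.Infinite) : RayEquivAvoiding G X R T := by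
  have := hinf.to_subtype
  refine rayEquivAvoiding_of_infinite
    (fun n : {n | T.f n ∈ R.verts} => ⟨T.f n, T.f n, .nil, .nil, n.2, n, rfl⟩) ?_ ?_
  · intro n v hv
    rw [show v = T.f n from List.mem_singleton.1 hv]
    exact Set.disjoint_left.mp hT ⟨n, rfl⟩
  · intro m n hmn
    simpa [PathBetween.verts] using fun h => hmn (Subtype.ext (T.inj h))

theorem Ray.verts_tail_subset (T : Ray G) (k : ℕ) : (T.tail k).verts ⊆ T.verts := by
  rintro v ⟨n, rfl⟩
  exact ⟨n + k, rfl⟩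

theorem Ray.exists_tail_disjoint (T : Ray G) (h : {n | T.f n ∈ Y}.Finite) :
    ∃ k, Disjoint (T.tail k).verts Y := by
  obtain ⟨k, hk⟩ := h.bddAbove
  refine ⟨k + 1, Set.disjoint_left.mpr ?_⟩
  rintro v ⟨n, rfl⟩ hv
  have := hk hv
  omega

theorem rayEquivAvoiding_tail (hT : Disjoint T.verts X) (k : ℕ) :
    RayEquivAvoiding G X T (T.tail k) := by
  refine rayEquivAvoiding_of_infinite_meets (hT.mono_left (T.verts_tail_subset k)) ?_
  convert infinite_univ (α := ℕ)
  exact eq_univ_of_forall fun n => ⟨n + k, rfl⟩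

theorem IsEndAvoiding.eq_of_mem {δ δ' : Set (Ray G)} (hδ : IsEndAvoiding G X δ)
    (hδ' : IsEndAvoiding G X δ') (h : T ∈ δ) (h' : T ∈ δ') : δ = δ' := by
  ext U
  constructor
  · intro hU
    have hUX := hδ.2.1 U hU
    exact (hδ'.2.2 T h' U hUX).2 ((hδ.2.2 T h U hUX).1 hU)
  · intro hU
    have hUX := hδ'.2.1 U hU
    exact (hδ.2.2 T h U hUX).2 ((hδ'.2.2 T h' U hUX).1 hU)

theorem IsEndAvoiding.tail_mem {δ : Set (Ray G)} (hδ : IsEndAvoiding G X δ) (hT : T ∈ δ)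
    (k : ℕ) : T.tail k ∈ δ :=
  (hδ.2.2 T hT _ ((hδ.2.1 T hT).mono_left (T.verts_tail_subset k))).2
    (rayEquivAvoiding_tail (hδ.2.1 T hT) k)

theorem IsEndAvoiding.subset_of_mem {ε δ : Set (Ray G)} (hε : IsEnd G ε)
    (hδ : IsEndAvoiding G X δ) (hT : T ∈ δ) (hTε : T ∈ ε) : δ ⊆ ε :=
  fun U hU => (hε.2 T hTε U).2 ((hδ.2.2 T hT U (hδ.2.1 U hU)).1 hU).rayEquiv

end RayEquiv

section Crossing

variable {G : SimpleGraph W} {R S T : Ray G}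

theorem rayEquivAvoiding_of_infinite_last_mem {B : Set W} (Q : ℕ → PathBetween G T.verts B)
    (hQ : ∀ n, (Q n).IsAB) (hdisj : Pairwise (Disjoint on fun n => (Q n).verts))
    (hRB : R.verts ⊆ B) (hRS : Disjoint R.verts S.verts)
    (hinf : {n | (Q n).last ∈ S.verts}.Infinite) : RayEquivAvoiding G R.verts T S := by
  have := hinf.to_subtype
  refine rayEquivAvoiding_of_infinite
    (fun n : {n | (Q n).last ∈ S.verts} => (Q n).ofMem (Q n).first_mem n.2) ?_
    (fun m n hmn => hdisj (Subtype.coe_injective.ne hmn))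
  intro n v hv hvR
  have hlast : v = (Q n).last := (hQ n).2 v hv (hRB hvR)
  exact Set.disjoint_left.mp hRS hvR (hlast ▸ n.2)

theorem RayEquiv.rayEquivAvoiding_or (h : RayEquiv G T S) (hRS : Disjoint R.verts S.verts) :
    RayEquivAvoiding G R.verts T S ∨ RayEquivAvoiding G S.verts T R := by
  obtain ⟨P, -, hPdisj⟩ := h
  have hcut (n : ℕ) := ((P n).ofMem (B' := R.verts ∪ S.verts) (P n).first_mem
    (Or.inr (P n).last_mem)).exists_isAB_subpath
  choose Q hQ hQP using hcut
  have hdisj : Pairwise (Disjoint on fun n => (Q n).verts) :=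
    fun m n hmn => (hPdisj m n hmn).mono (hQP m) (hQP n)
  have hsplit :
      {n | (Q n).last ∈ S.verts}.Infinite ∨ {n | (Q n).last ∈ R.verts}.Infinite := by
    rw [← infinite_union]
    convert infinite_univ (α := ℕ)
    exact eq_univ_of_forall fun n => ((Q n).last_mem).symm
  exact hsplit.imp
    (rayEquivAvoiding_of_infinite_last_mem Q hQ hdisj subset_union_left hRS)
    (rayEquivAvoiding_of_infinite_last_mem Q hQ hdisj subset_union_right hRS.symm)

theorem SubEnd.of_crossing {ε δS δS' δR : Set (Ray G)} (hε : IsEnd G ε) (hSε : S ∈ ε)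
    (hRS : Disjoint R.verts S.verts) (hδS : IsEndAvoiding G S.verts δS)
    (hδS' : IsEndAvoiding G S.verts δS') (hne : δS ≠ δS') (hδS'ε : δS' ⊆ ε)
    (hδR : IsEndAvoiding G R.verts δR) (hR : R ∈ δS) (hS : S ∈ δR) : SubEnd G δS' δR := by
  have hsep : ∀ T ∈ δS', ¬ RayEquivAvoiding G S.verts R T := fun T hT h =>
    hne (hδS.eq_of_mem hδS' ((hδS.2.2 R hR T (hδS'.2.1 T hT)).2 h) hT)
  intro T hT
  obtain ⟨k, hk⟩ := T.exists_tail_disjoint (Y := R.verts) <| not_infinite.1 fun hinf =>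
    hsep T hT (rayEquivAvoiding_of_infinite_meets (hδS'.2.1 T hT) hinf)
  have hT' : T.tail k ∈ δS' := hδS'.tail_mem hT k
  refine ⟨T.tail k, ⟨k, fun _ => rfl⟩, ?_⟩
  rcases ((hε.2 _ (hδS'ε hT') S).1 hSε).rayEquivAvoiding_or hRS with h | h
  · exact (hδR.2.2 S hS _ hk).2 h.symm
  · exact absurd h.symm (hsep _ hT')

end Crossing

theorem exists_rayGraph_adj_of_rayEquivAvoiding {Γ : SimpleGraph W} {I : Type} [Finite I]
    {F : I → Ray Γ} (hF : ∀ i j, i ≠ j → Disjoint (F i).verts (F j).verts) {c : I}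
    {A B : Set I} (hAB : Disjoint A B) (hunion : A ∪ B = {i | i ≠ c}) {a b : I} (ha : a ∈ A)
    (hb : b ∈ B) (h : RayEquivAvoiding Γ (F c).verts (F a) (F b)) :
    ∃ a' ∈ A, ∃ b' ∈ B, (rayGraph Γ F).Adj a' b' := by
  obtain ⟨P, havoid, hPdisj⟩ := h
  have hcut (n : ℕ) :=
    ((P n).ofMem (A' := ⋃ i ∈ A, (F i).verts) (B' := ⋃ j ∈ B, (F j).verts)
      (mem_biUnion ha (P n).first_mem) (mem_biUnion hb (P n).last_mem)).exists_isAB_subpath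
  choose Q hQ hQP using hcut
  have hends (n : ℕ) :
      ∃ i ∈ A, ∃ j ∈ B, (Q n).first ∈ (F i).verts ∧ (Q n).last ∈ (F j).verts := by
    obtain ⟨i, hi, hfirst⟩ := mem_iUnion₂.1 (Q n).first_mem
    obtain ⟨j, hj, hlast⟩ := mem_iUnion₂.1 (Q n).last_mem
    exact ⟨i, hi, j, hj, hfirst, hlast⟩
  choose α hα β hβ hfirst hlast using hends
  obtain ⟨⟨a', b'⟩, hfib⟩ := Finite.exists_infinite_fiber fun n => (α n, β n)
  have hends' {n : ℕ} (hn : (α n, β n) = (a', b')) :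
      (Q n).first ∈ (F a').verts ∧ (Q n).last ∈ (F b').verts := by
    obtain ⟨rfl, rfl⟩ := Prod.mk.inj hn
    exact ⟨hfirst n, hlast n⟩
  obtain ⟨n₀, hn₀⟩ := hfib.nonempty
  obtain ⟨ha', hb'⟩ : a' ∈ A ∧ b' ∈ B := by
    obtain ⟨rfl, rfl⟩ := Prod.mk.inj hn₀
    exact ⟨hα n₀, hβ n₀⟩
  refine ⟨a', ha', b', hb', fun h => Set.disjoint_left.mp hAB ha' (h ▸ hb'), Or.inl ?_⟩
  let e := Infinite.natEmbedding ((fun n => (α n, β n)) ⁻¹' {(a', b')})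
  refine ⟨fun m => (Q (e m)).ofMem (hends' (e m).2).1 (hends' (e m).2).2,
    fun m m' hmm' => ?_, fun m k hka hkb => ?_⟩
  · exact (hPdisj _ _ (Subtype.coe_injective.ne (e.injective.ne hmm'))).mono (hQP _) (hQP _)
  refine Set.disjoint_left.mpr fun v hvQ hvk => ?_
  by_cases hkc : k = c
  · exact havoid (e m) v (hQP _ hvQ) (hkc ▸ hvk)
  rcases (hunion.symm.subset hkc : k ∈ A ∪ B) with hkA | hkB
  · have hv : v = (Q (e m)).first := (hQ _).1 v hvQ (mem_biUnion hkA hvk)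
    exact Set.disjoint_left.mp (hF k a' hka) hvk (hv ▸ (hends' (e m).2).1)
  · have hv : v = (Q (e m)).last := (hQ _).2 v hvQ (mem_biUnion hkB hvk)
    exact Set.disjoint_left.mp (hF k b' hkb) hvk (hv ▸ (hends' (e m).2).2)

theorem IsCoreRay.subset_of_splitsInto {Γ : SimpleGraph W} {ε : Set (Ray Γ)}
    {hg : HalfGridLike Γ ε} {S : Ray Γ} {δ δ' : Set (Ray Γ)} (hS : IsCoreRay hg S)
    (h : SplitsInto Γ ε S.verts δ δ') : δ' ⊆ ε := by
  obtain ⟨-, n, F, c, ⟨hFε, hF⟩, rfl, A, B, ⟨a, ha⟩, ⟨b, hb⟩, hAB, hunion, -, -, hcross, -, -⟩ :=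
    hS
  obtain ⟨hδ, hδ', -, hcover⟩ := h
  have hne (i : Fin n) (hi : i ∈ A ∪ B) : i ≠ c := hunion.subset hi
  have hsep : ¬ RayEquivAvoiding Γ (F c).verts (F a) (F b) := fun hab => by
    obtain ⟨a', ha', b', hb', hadj⟩ :=
      exists_rayGraph_adj_of_rayEquivAvoiding hF hAB hunion ha hb hab
    exact hcross a' ha' b' hb' <| reachAvoid_of_adj hadj (hne a' (Or.inl ha')) (hne b' (Or.inr hb'))
  have hδ'ε : ∃ U ∈ ε, U ∈ δ' := by
    rcases hcover (F a) (hFε a) (hF a c (hne a (Or.inl ha))) with hFa | hFa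
    · rcases hcover (F b) (hFε b) (hF b c (hne b (Or.inr hb))) with hFb | hFb
      · exact absurd ((hδ.2.2 _ hFa _ (hF b c (hne b (Or.inr hb)))).1 hFb) hsep
      · exact ⟨_, hFε b, hFb⟩
    · exact ⟨_, hFε a, hFa⟩
  obtain ⟨U, hUε, hU⟩ := hδ'ε
  exact hδ'.subset_of_mem hg.isEnd hU hUε

/-- If `R ∈ ε′_S` and `S ∈ ε′_R`, then `ε″_S` is a sub-end of `ε′_R`
and `ε″_R` is a sub-end of `ε′_S`. -/
theorem subends_of_disjoint_core_rays
    (Γ : SimpleGraph W) (ε : Set (Ray Γ)) (hg : HalfGridLike Γ ε)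
    (R S : Ray Γ) (hR : IsCoreRay hg R) (hS : IsCoreRay hg S)
    (hdisj : Disjoint R.verts S.verts)
    (εS' εS'' εR' εR'' : Set (Ray Γ))
    (hsplitS : SplitsInto Γ ε S.verts εS' εS'')
    (hsplitR : SplitsInto Γ ε R.verts εR' εR'')
    (hRmem : R ∈ εS') (hSmem : S ∈ εR') :
    SubEnd Γ εS'' εR' ∧ SubEnd Γ εR'' εS' :=
  ⟨SubEnd.of_crossing hg.isEnd hS.1 hdisj hsplitS.1 hsplitS.2.1 hsplitS.2.2.1
      (hS.subset_of_splitsInto hsplitS) hsplitR.1 hRmem hSmem,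
    SubEnd.of_crossing hg.isEnd hR.1 hdisj.symm hsplitR.1 hsplitR.2.1 hsplitR.2.2.1
      (hR.subset_of_splitsInto hsplitR) hsplitS.1 hSmem hRmem⟩

end Ubiquity
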